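/- Let f = f_{IG(μ,λ)} be an inverse Gaussian density with μ > 0 and λ > 0, and let c* be defined from f. Then for every c with 0 < c ≤ c*, one has −∫_c^∞ f(u) log f(u) du ≥ −∫_{c*}^∞ f(u) log f(u) du. -/

import Mathlib

/-!
On `(0, c*]` the density is at most `1`: it tends to `0` at `0⁺`, so if it exceeded `1` at
some `u ≤ c*`, the intermediate value theorem would produce a point below `u` where it equals
`1`, contradicting the definition of `c*`. Hence `f log f ≤ 0` on `(c, c*]`, and splitting
`∫_c^∞` at `c*` gives the inequality. All integrals are finite since `|f log f| ≤ f² + 2√f`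
and `f` decays exponentially.
-/

open Classical

/-- The inverse Gaussian density. -/
noncomputable def igPdf (μ lam x : ℝ) : ℝ :=
  if 0 < x then
    Real.sqrt (lam / (2 * Real.pi * x ^ 3)) *
      Real.exp (-(lam * (x - μ) ^ 2) / (2 * μ ^ 2 * x))
  else 0

/-- `c* = 0` if `f(u) < 1` for all `u`, and `c* = inf {u | f u = 1}` otherwise. -/
noncomputable def cstar (f : ℝ → ℝ) : ℝ :=
  if ∀ u, f u < 1 then 0 else sInf {u | f u = 1}

open Set Filter Topology MeasureTheory Real

lemma igPdf_nonneg (μ lam x : ℝ) : 0 ≤ igPdf μ lam x := by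
  unfold igPdf; split_ifs <;> positivity

lemma measurable_igPdf (μ lam : ℝ) : Measurable (igPdf μ lam) :=
  Measurable.ite measurableSet_Ioi (by fun_prop) measurable_const

lemma continuousOn_igPdf {μ : ℝ} (hμ : μ ≠ 0) (lam : ℝ) :
    ContinuousOn (igPdf μ lam) (Ioi 0) := by
  refine ContinuousOn.congr (f := fun x => √(lam / (2 * π * x ^ 3)) *
      exp (-(lam * (x - μ) ^ 2) / (2 * μ ^ 2 * x))) ?_ fun x (hx : 0 < x) => if_pos hx
  refine ContinuousOn.mul ?_ ?_
  · exact (continuousOn_const.div (by fun_prop) fun x (hx : 0 < x) => by positivity).sqrt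
  · exact (ContinuousOn.div (by fun_prop) (by fun_prop) fun x (hx : 0 < x) => by positivity).rexp

lemma igPdf_eq_of_pos {μ : ℝ} (hμ : μ ≠ 0) {lam x : ℝ} (hx : 0 < x) :
    igPdf μ lam x = √(lam / (2 * π)) * exp (lam / μ) *
      (x⁻¹ ^ (3 / 2 : ℝ) * exp (-(lam / 2) * x⁻¹)) * exp (-(lam / (2 * μ ^ 2)) * x) := by
  have hsqrt : √(lam / (2 * π * x ^ 3)) = √(lam / (2 * π)) * x⁻¹ ^ (3 / 2 : ℝ) := by
    rw [show lam / (2 * π * x ^ 3) = lam / (2 * π) * x⁻¹ ^ 3 by field_simp,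
      sqrt_mul' _ (by positivity), sqrt_eq_rpow (x⁻¹ ^ 3), ← rpow_natCast,
      ← rpow_mul (inv_nonneg.2 hx.le)]
    norm_num
  have hexp : -(lam * (x - μ) ^ 2) / (2 * μ ^ 2 * x)
      = lam / μ + -(lam / 2) * x⁻¹ + -(lam / (2 * μ ^ 2)) * x := by
    field_simp; ring
  rw [igPdf, if_pos hx, hsqrt, hexp, exp_add, exp_add]
  ring

lemma igPdf_le_mul_exp {μ lam : ℝ} (hμ : μ ≠ 0) (hlam : 0 ≤ lam) {a x : ℝ} (ha : 0 < a)
    (hx : a ≤ x) :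
    igPdf μ lam x ≤ √(lam / (2 * π)) * exp (lam / μ) * a⁻¹ ^ (3 / 2 : ℝ) *
      exp (-(lam / (2 * μ ^ 2)) * x) := by
  have hx0 : 0 < x := ha.trans_le hx
  rw [igPdf_eq_of_pos hμ hx0]
  have hexp : exp (-(lam / 2) * x⁻¹) ≤ 1 := exp_le_one_iff.2 (by
    have := inv_pos.2 hx0; nlinarith)
  gcongr
  calc x⁻¹ ^ (3 / 2 : ℝ) * exp (-(lam / 2) * x⁻¹)
      ≤ x⁻¹ ^ (3 / 2 : ℝ) * 1 := by gcongr
    _ ≤ a⁻¹ ^ (3 / 2 : ℝ) := by rw [mul_one]; gcongr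

lemma tendsto_igPdf_nhdsGT_zero {μ lam : ℝ} (hμ : μ ≠ 0) (hlam : 0 < lam) :
    Tendsto (igPdf μ lam) (𝓝[>] 0) (𝓝 0) := by
  have hsing : Tendsto (fun x : ℝ => x⁻¹ ^ (3 / 2 : ℝ) * exp (-(lam / 2) * x⁻¹))
      (𝓝[>] 0) (𝓝 0) :=
    (tendsto_rpow_mul_exp_neg_mul_atTop_nhds_zero _ _ (by positivity)).comp
      tendsto_inv_nhdsGT_zero
  have hreg : Tendsto (fun x : ℝ => exp (-(lam / (2 * μ ^ 2)) * x)) (𝓝[>] 0) (𝓝 1) :=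
    (Continuous.tendsto' (by fun_prop) 0 1 (by simp)).mono_left nhdsWithin_le_nhds
  have := (hsing.const_mul (√(lam / (2 * π)) * exp (lam / μ))).mul hreg
  rw [mul_zero, zero_mul] at this
  exact this.congr' (eventually_nhdsWithin_of_forall fun x hx => (igPdf_eq_of_pos hμ hx).symm)

lemma le_one_of_le_cstar {f : ℝ → ℝ} (hf : ContinuousOn f (Ioi 0))
    (hf0 : ∀ᶠ x in 𝓝[>] 0, f x < 1) (hbdd : BddBelow {u | f u = 1}) {u : ℝ} (hu : 0 < u)
    (huc : u ≤ cstar f) : f u ≤ 1 := by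
  by_contra! hfu
  have hne : ¬∀ v, f v < 1 := fun h => (h u).not_gt hfu
  rw [cstar, if_neg hne] at huc
  obtain ⟨p, hfp, hp⟩ := (hf0.and (Ioo_mem_nhdsGT hu)).exists
  obtain ⟨t, ht, hft⟩ := intermediate_value_Icc hp.2.le (hf.mono fun x hx => hp.1.trans_le hx.1)
    ⟨hfp.le, hfu.le⟩
  have htu : t < u := ht.2.lt_of_ne (by rintro rfl; exact hfu.ne' hft)
  exact (huc.trans (csInf_le hbdd hft)).not_gt htu

lemma abs_mul_log_le {t : ℝ} (ht : 0 ≤ t) : |t * log t| ≤ t ^ 2 + 2 * √t := by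
  rcases ht.eq_or_lt with rfl | ht
  · simp
  have hs : 0 < √t := sqrt_pos.2 ht
  have hts : t * (√t)⁻¹ = √t := by rw [← div_eq_mul_inv, div_sqrt]
  have hlower : 2 * t - 2 * √t ≤ t * log t :=
    calc 2 * t - 2 * √t = 2 * t * (1 - (√t)⁻¹) := by linear_combination 2 * hts
      _ ≤ 2 * t * log √t := by gcongr; exact one_sub_inv_le_log_of_pos hs
      _ = t * log t := by rw [log_sqrt ht.le]; ring
  rw [abs_le]
  constructor
  · nlinarith
  · nlinarith [log_le_sub_one_of_pos ht]

lemma integrableOn_mul_log_of_le_mul_exp {g : ℝ → ℝ} {a C k : ℝ} (hg : Measurable g)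
    (hk : 0 < k) (hg0 : ∀ x > a, 0 ≤ g x) (hgC : ∀ x > a, g x ≤ C * exp (-k * x)) :
    IntegrableOn (fun x => g x * log (g x)) (Ioi a) := by
  refine Integrable.mono'
    (g := fun x => C ^ 2 * exp (-(2 * k) * x) + 2 * √C * exp (-(k / 2) * x))
    (((exp_neg_integrableOn_Ioi a (by positivity)).const_mul _).add
      ((exp_neg_integrableOn_Ioi a (by positivity)).const_mul _))
    (hg.mul (measurable_log.comp hg)).aestronglyMeasurable ?_
  filter_upwards [ae_restrict_mem measurableSet_Ioi] with x hx
  have hsq : g x ^ 2 ≤ C ^ 2 * exp (-(2 * k) * x) := by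
    calc g x ^ 2 ≤ (C * exp (-k * x)) ^ 2 := pow_le_pow_left₀ (hg0 x hx) (hgC x hx) 2
      _ = C ^ 2 * exp (-(2 * k) * x) := by rw [mul_pow, ← exp_nat_mul]; ring_nf
  have hsqrt : √(g x) ≤ √C * exp (-(k / 2) * x) := by
    calc √(g x) ≤ √(C * exp (-k * x)) := sqrt_le_sqrt (hgC x hx)
      _ = √C * exp (-(k / 2) * x) := by
        rw [sqrt_mul' _ (exp_nonneg _), ← exp_half]; ring_nf
  calc ‖g x * log (g x)‖ ≤ g x ^ 2 + 2 * √(g x) := abs_mul_log_le (hg0 x hx)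
    _ ≤ _ := by linarith

lemma integrableOn_igPdf_mul_log {μ lam : ℝ} (hμ : μ ≠ 0) (hlam : 0 < lam) {a : ℝ}
    (ha : 0 < a) :
    IntegrableOn (fun x => igPdf μ lam x * log (igPdf μ lam x)) (Ioi a) :=
  integrableOn_mul_log_of_le_mul_exp (measurable_igPdf μ lam) (by positivity)
    (fun x _ => igPdf_nonneg μ lam x) fun _ hx => igPdf_le_mul_exp hμ hlam.le ha hx.le

lemma setIntegral_Ioi_le_of_nonpos_on_Ioc {g : ℝ → ℝ} {c d : ℝ} (hcd : c ≤ d)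
    (hg : IntegrableOn g (Ioi c)) (hneg : ∀ x ∈ Ioc c d, g x ≤ 0) :
    ∫ x in Ioi c, g x ≤ ∫ x in Ioi d, g x := by
  rw [← Ioc_union_Ioi_eq_Ioi hcd, setIntegral_union Ioc_disjoint_Ioi_same measurableSet_Ioi
    (hg.mono_set Ioc_subset_Ioi_self) (hg.mono_set (Ioi_subset_Ioi hcd))]
  linarith [setIntegral_nonpos (μ := volume) measurableSet_Ioc hneg]

/-- for an inverse Gaussian density `f` and every `c` with `0 < c ≤ c*`,
`−∫_c^∞ f log f ≥ −∫_{c*}^∞ f log f`. -/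
theorem tail_entropy_integral_ge (μ lam : ℝ) (hμ : 0 < μ) (hlam : 0 < lam)
    (c : ℝ) (hc : 0 < c) (hcc : c ≤ cstar (igPdf μ lam)) :
    -∫ u in Set.Ioi c, igPdf μ lam u * Real.log (igPdf μ lam u)
      ≥ -∫ u in Set.Ioi (cstar (igPdf μ lam)), igPdf μ lam u * Real.log (igPdf μ lam u) := by
  have hbdd : BddBelow {u | igPdf μ lam u = 1} := ⟨0, fun u hu => by
    by_contra! hu0
    simp [igPdf, hu0.le.not_gt] at hu⟩
  have hle_one : ∀ x ∈ Ioc c (cstar (igPdf μ lam)), igPdf μ lam x ≤ 1 := fun x hx =>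
    le_one_of_le_cstar (continuousOn_igPdf hμ.ne' lam)
      ((tendsto_igPdf_nhdsGT_zero hμ.ne' hlam).eventually (eventually_lt_nhds one_pos))
      hbdd (hc.trans hx.1) hx.2
  exact neg_le_neg <| setIntegral_Ioi_le_of_nonpos_on_Ioc hcc
    (integrableOn_igPdf_mul_log hμ.ne' hlam hc) fun x hx =>
      mul_log_nonpos (igPdf_nonneg μ lam x) (hle_one x hx)
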